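/- The motivic exponential Exp on ℤ[u,v]⟦t⟧ (defined by Exp(∑ f_n t^n) = ∏_{n,i,j}(1-u^i v^j t^n)^{-p^{(n)}_{ij}} where f_n = ∑ p^{(n)}_{ij}u^i v^j) is injective; equivalently, it is a group isomorphism from (t·ℤ[u,v]⟦t⟧, +) onto (1 + t·ℤ[u,v]⟦t⟧, ·). -/

import Mathlib

open PowerSeries

/-- The polynomial ring `ℤ[u,v]`. -/
abbrev P2 : Type := MvPolynomial (Fin 2) ℤ

/-- `f ^ p` for an integer exponent `p`. -/
noncomputable def rzpow {R : Type*} [CommRing R] (f : PowerSeries R) (p : ℤ) :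
    PowerSeries R :=
  f ^ p.toNat * (Ring.inverse f) ^ (-p).toNat

/-- The factor `∏_{i,j} (1 - u^i v^j t^n)^{-p_{ij}}` for `f = ∑ p_{ij} u^i v^j`. -/
noncomputable def expFactor (n : ℕ) (f : P2) : PowerSeries P2 :=
  ∏ d ∈ f.support,
    rzpow (1 - PowerSeries.C (MvPolynomial.monomial d 1) * X ^ n)
      (-(MvPolynomial.coeff d f))

/-- The motivic exponential
`Exp(∑_{n≥1} fₙ tⁿ) = ∏_{n≥1} ∏_{i,j} (1 - u^i v^j tⁿ)^{-p^{(n)}_{ij}}`, the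
infinite product taken in the t-adic topology (the factor with index `n` only
affects coefficients of `t^k` with `k ≥ n`). -/
noncomputable def Exp2 (A : PowerSeries P2) : PowerSeries P2 :=
  PowerSeries.mk fun k =>
    coeff k (∏ n ∈ Finset.Icc 1 k, expFactor n (coeff n A))

/-!
Each factor `expFactor n f` is congruent to `1` modulo `tⁿ` and has `tⁿ`-coefficient `f`; it is
additive in `f`, and `coeff n` is a homomorphism from the units `≡ 1 mod tⁿ` to `(R, +)`. Hence
the coefficient of `t^(k+1)` in `Exp A` is `f_{k+1}` plus a quantity depending only on
`f_1, …, f_k`: this triangular shape gives injectivity, and surjectivity by solving for `f_{k+1}`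
recursively. Multiplicativity holds for the finite partial products and passes to `Exp`, since
the coefficient of `t^k` in `Exp A` only sees the first `k` factors.
-/

namespace PowerSeries

variable {R : Type*} [CommRing R] {n : ℕ} {g h : R⟦X⟧}

theorem coeff_mul_of_lt_of_X_pow_dvd_sub_one {m : ℕ} (hm : m < n) (hh : X ^ n ∣ h - 1) :
    coeff m (g * h) = coeff m g := by
  obtain ⟨q, hq⟩ := hh
  rw [show g * h = g + X ^ n * (g * q) by linear_combination g * hq, map_add,
    coeff_X_pow_mul', if_neg (by omega), add_zero]

theorem coeff_mul_of_X_pow_dvd_sub_one (hh : X ^ n ∣ h - 1) :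
    coeff n (g * h) = coeff n g + constantCoeff g * coeff n (h - 1) := by
  obtain ⟨q, hq⟩ := hh
  rw [show g * h = g + X ^ n * (g * q) by linear_combination g * hq, hq, map_add,
    coeff_X_pow_mul', coeff_X_pow_mul', if_pos le_rfl, if_pos le_rfl, Nat.sub_self,
    coeff_zero_eq_constantCoeff, map_mul]

theorem constantCoeff_eq_one_of_X_pow_dvd_sub_one (hn : n ≠ 0) (hg : X ^ n ∣ g - 1) :
    constantCoeff g = 1 := by
  have := X_pow_dvd_iff.mp hg 0 (Nat.pos_of_ne_zero hn)
  rwa [coeff_zero_eq_constantCoeff, map_sub, map_one, sub_eq_zero] at this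

variable (R) in
def unitsCongrOne (n : ℕ) : Subgroup R⟦X⟧ˣ where
  carrier := {u | X ^ n ∣ (u : R⟦X⟧) - 1}
  one_mem' := by simp
  mul_mem' {u v} hu hv := by simpa using dvd_mul_sub_mul hu hv
  inv_mem' {u} hu := by
    have : ((u⁻¹ : R⟦X⟧ˣ) : R⟦X⟧) - 1 = -(↑u⁻¹ * (↑u - 1)) := by
      rw [mul_sub, Units.inv_mul]; ring
    simpa [this] using hu.mul_left (↑u⁻¹ : R⟦X⟧)

theorem X_pow_dvd_coe_sub_one (u : unitsCongrOne R n) :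
    X ^ n ∣ ((u : R⟦X⟧ˣ) : R⟦X⟧) - 1 :=
  u.2

/-- `(1 + tⁿa)(1 + tⁿb) ≡ 1 + tⁿ(a + b) mod tⁿ⁺¹` for `n ≠ 0`. -/
noncomputable def coeffCongrOneHom (hn : n ≠ 0) : unitsCongrOne R n →* Multiplicative R where
  toFun u := Multiplicative.ofAdd (coeff n ((u : R⟦X⟧ˣ) : R⟦X⟧))
  map_one' := by simp [coeff_one, hn]
  map_mul' u v := by
    have := coeff_mul_of_X_pow_dvd_sub_one (g := ((u : R⟦X⟧ˣ) : R⟦X⟧))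
      (X_pow_dvd_coe_sub_one v)
    rw [constantCoeff_eq_one_of_X_pow_dvd_sub_one hn (X_pow_dvd_coe_sub_one u), one_mul,
      map_sub, coeff_one, if_neg hn, sub_zero] at this
    simp [this]

noncomputable def oneSubCMulXPow (hn : n ≠ 0) (a : R) : unitsCongrOne R n :=
  ⟨(isUnit_iff_constantCoeff.mpr (by simp [hn])).unit,
    ⟨-C a, show 1 - C a * X ^ n - 1 = X ^ n * -C a by ring⟩⟩

@[simp]
theorem coe_oneSubCMulXPow (hn : n ≠ 0) (a : R) :
    ((oneSubCMulXPow hn a : R⟦X⟧ˣ) : R⟦X⟧) = 1 - C a * X ^ n := rfl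

theorem coeffCongrOneHom_oneSubCMulXPow (hn : n ≠ 0) (a : R) :
    coeffCongrOneHom hn (oneSubCMulXPow hn a) = Multiplicative.ofAdd (-a) := by
  simp [coeffCongrOneHom, coeff_one, hn]

theorem rzpow_coe_units (u : R⟦X⟧ˣ) (p : ℤ) : rzpow (u : R⟦X⟧) p = ↑(u ^ p) := by
  cases p with
  | ofNat m => simp [rzpow]
  | negSucc m => simp [rzpow, zpow_negSucc]

end PowerSeries

section

variable {n : ℕ}

theorem expFactor_eq_prod (hn : n ≠ 0) {f : P2} {s : Finset (Fin 2 →₀ ℕ)}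
    (hs : f.support ⊆ s) :
    expFactor n f = ((∏ d ∈ s, oneSubCMulXPow hn (MvPolynomial.monomial d 1) ^
      (-MvPolynomial.coeff d f) : unitsCongrOne P2 n) : P2⟦X⟧ˣ) := by
  rw [expFactor, Finset.prod_subset hs fun d _ hd => by
    simp [MvPolynomial.notMem_support_iff.mp hd, rzpow]]
  simp only [← coe_oneSubCMulXPow hn, rzpow_coe_units, Subgroup.val_finsetProd, Units.coe_prod,
    Subgroup.coe_zpow]

theorem X_pow_dvd_expFactor_sub_one (hn : n ≠ 0) (f : P2) : X ^ n ∣ expFactor n f - 1 := by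
  rw [expFactor_eq_prod hn subset_rfl]
  exact X_pow_dvd_coe_sub_one _

theorem coeff_expFactor (hn : n ≠ 0) (f : P2) : coeff n (expFactor n f) = f := by
  have := congrArg Multiplicative.toAdd (map_prod (coeffCongrOneHom (R := P2) hn)
    (fun d => oneSubCMulXPow hn (MvPolynomial.monomial d 1) ^ (-MvPolynomial.coeff d f))
    f.support)
  simp only [map_zpow, coeffCongrOneHom_oneSubCMulXPow, toAdd_prod, toAdd_zpow, toAdd_ofAdd,
    zsmul_neg, neg_smul, neg_neg, MvPolynomial.smul_monomial, smul_eq_mul, mul_one,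
    MvPolynomial.support_sum_monomial_coeff] at this
  rw [expFactor_eq_prod hn subset_rfl]
  exact this

theorem expFactor_add (hn : n ≠ 0) (f g : P2) :
    expFactor n (f + g) = expFactor n f * expFactor n g := by
  classical
  rw [expFactor_eq_prod hn MvPolynomial.support_add,
    expFactor_eq_prod hn Finset.subset_union_left,
    expFactor_eq_prod hn Finset.subset_union_right, ← Units.val_mul, ← Subgroup.coe_mul,
    ← Finset.prod_mul_distrib]
  simp only [MvPolynomial.coeff_add, neg_add, zpow_add]

noncomputable def partialExp2 (A : PowerSeries P2) (k : ℕ) : PowerSeries P2 :=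
  ∏ n ∈ Finset.Icc 1 k, expFactor n (coeff n A)

theorem partialExp2_zero (A : PowerSeries P2) : partialExp2 A 0 = 1 := rfl

theorem partialExp2_succ (A : PowerSeries P2) (k : ℕ) :
    partialExp2 A (k + 1) = partialExp2 A k * expFactor (k + 1) (coeff (k + 1) A) :=
  Finset.prod_Icc_succ_top (by omega) _

theorem coeff_partialExp2_of_le (A : PowerSeries P2) {i k : ℕ} (h : i ≤ k) :
    coeff i (partialExp2 A k) = coeff i (partialExp2 A i) := by
  induction k, h using Nat.le_induction with
  | base => rfl
  | succ k hik ih =>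
    rw [partialExp2_succ, coeff_mul_of_lt_of_X_pow_dvd_sub_one (Nat.lt_succ_of_le hik)
      (X_pow_dvd_expFactor_sub_one k.succ_ne_zero _), ih]

theorem constantCoeff_partialExp2 (A : PowerSeries P2) (k : ℕ) :
    constantCoeff (partialExp2 A k) = 1 := by
  rw [← coeff_zero_eq_constantCoeff_apply, coeff_partialExp2_of_le A k.zero_le,
    partialExp2_zero, coeff_one, if_pos rfl]

theorem coeff_Exp2_eq_coeff_partialExp2 (A : PowerSeries P2) {i k : ℕ} (h : i ≤ k) :
    coeff i (Exp2 A) = coeff i (partialExp2 A k) := by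
  rw [Exp2, coeff_mk, ← partialExp2, coeff_partialExp2_of_le A h]

theorem constantCoeff_Exp2 (A : PowerSeries P2) : constantCoeff (Exp2 A) = 1 := by
  rw [← coeff_zero_eq_constantCoeff_apply, coeff_Exp2_eq_coeff_partialExp2 A le_rfl,
    coeff_zero_eq_constantCoeff_apply, constantCoeff_partialExp2]

theorem coeff_succ_Exp2 (A : PowerSeries P2) (k : ℕ) :
    coeff (k + 1) (Exp2 A) = coeff (k + 1) (partialExp2 A k) + coeff (k + 1) A := by
  have hk : k + 1 ≠ 0 := k.succ_ne_zero
  rw [coeff_Exp2_eq_coeff_partialExp2 A le_rfl, partialExp2_succ,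
    coeff_mul_of_X_pow_dvd_sub_one (X_pow_dvd_expFactor_sub_one hk _),
    constantCoeff_partialExp2, one_mul, map_sub, coeff_one, if_neg hk, sub_zero,
    coeff_expFactor hk]

theorem X_pow_succ_dvd_Exp2_sub_partialExp2 (A : PowerSeries P2) (k : ℕ) :
    X ^ (k + 1) ∣ Exp2 A - partialExp2 A k :=
  X_pow_dvd_iff.mpr fun i hi => by
    rw [map_sub, coeff_Exp2_eq_coeff_partialExp2 A (Nat.lt_succ_iff.mp hi), sub_self]

theorem partialExp2_add (A B : PowerSeries P2) (k : ℕ) :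
    partialExp2 (A + B) k = partialExp2 A k * partialExp2 B k := by
  rw [partialExp2, partialExp2, partialExp2, ← Finset.prod_mul_distrib]
  exact Finset.prod_congr rfl fun n hn => by
    rw [map_add, expFactor_add (Nat.one_le_iff_ne_zero.mp (Finset.mem_Icc.mp hn).1)]

theorem Exp2_add (A B : PowerSeries P2) : Exp2 (A + B) = Exp2 A * Exp2 B := by
  refine PowerSeries.ext fun k => ?_
  have hdvd : X ^ (k + 1) ∣ Exp2 (A + B) - Exp2 A * Exp2 B := by
    have := dvd_sub (X_pow_succ_dvd_Exp2_sub_partialExp2 (A + B) k)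
      (dvd_mul_sub_mul (X_pow_succ_dvd_Exp2_sub_partialExp2 A k)
        (X_pow_succ_dvd_Exp2_sub_partialExp2 B k))
    rwa [partialExp2_add, sub_sub_sub_cancel_right] at this
  rw [← sub_eq_zero, ← map_sub]
  exact X_pow_dvd_iff.mp hdvd k k.lt_succ_self

theorem eq_of_Exp2_eq {A B : PowerSeries P2} (h₀ : constantCoeff A = constantCoeff B)
    (h : Exp2 A = Exp2 B) : A = B := by
  refine PowerSeries.ext fun k => ?_
  induction k using Nat.strong_induction_on with
  | _ k ih =>
    cases k with
    | zero => simpa using h₀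
    | succ k =>
      have hpartial : partialExp2 A k = partialExp2 B k :=
        Finset.prod_congr rfl fun n hn => by
          rw [ih n (Nat.lt_succ_of_le (Finset.mem_Icc.mp hn).2)]
      have := congrArg (coeff (k + 1)) h
      rwa [coeff_succ_Exp2, coeff_succ_Exp2, hpartial, add_right_inj] at this

/-- Solves `coeff_succ_Exp2` for the last coefficient. -/
noncomputable def log2Coeff (B : PowerSeries P2) : ℕ → P2
  | 0 => 0
  | k + 1 => coeff (k + 1) B -
      coeff (k + 1) (∏ n ∈ (Finset.Icc 1 k).attach, expFactor n (log2Coeff B n))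
  decreasing_by exact Nat.lt_succ_of_le (Finset.mem_Icc.mp n.2).2

theorem log2Coeff_succ (B : PowerSeries P2) (k : ℕ) :
    log2Coeff B (k + 1) =
      coeff (k + 1) B - coeff (k + 1) (partialExp2 (mk (log2Coeff B)) k) := by
  rw [log2Coeff, Finset.prod_attach (Finset.Icc 1 k) fun n => expFactor n (log2Coeff B n)]
  simp only [partialExp2, coeff_mk]

theorem Exp2_mk_log2Coeff {B : PowerSeries P2} (hB : constantCoeff B = 1) :
    Exp2 (mk (log2Coeff B)) = B := by
  refine PowerSeries.ext fun k => ?_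
  cases k with
  | zero => simp [constantCoeff_Exp2, hB]
  | succ k => rw [coeff_succ_Exp2, coeff_mk, log2Coeff_succ, add_sub_cancel]

end

/-- The motivic exponential on `ℤ[u,v]⟦t⟧` is injective; equivalently it is a
group isomorphism from `(t·ℤ[u,v]⟦t⟧, +)` onto `(1 + t·ℤ[u,v]⟦t⟧, ·)`. -/
theorem Exp2_injective_group_iso :
    (∀ A B : PowerSeries P2, constantCoeff A = 0 → constantCoeff B = 0 →
      Exp2 A = Exp2 B → A = B) ∧
    (∀ A B : PowerSeries P2, constantCoeff A = 0 → constantCoeff B = 0 →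
      Exp2 (A + B) = Exp2 A * Exp2 B) ∧
    (∀ B : PowerSeries P2, constantCoeff B = 1 →
      ∃ A : PowerSeries P2, constantCoeff A = 0 ∧ Exp2 A = B) :=
  ⟨fun _ _ hA hB h => eq_of_Exp2_eq (hA.trans hB.symm) h,
    fun A B _ _ => Exp2_add A B,
    fun _ hB => ⟨_, by simp [log2Coeff], Exp2_mk_log2Coeff hB⟩⟩
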